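/- Let N ≥ 1, 1 < p < ∞, h > 0. Assume (H1), (H2) with constant K > 0, and (H3): |f(x)| ≤ a for all x ∈ ℝ, with a > 0. Let J be a nonnegative bounded measurable function supported in the closed unit ball, and set R = a K^{1/p} ‖J‖_{L¹} + h. If u : [0,∞) → L^p(ℝ^N, ρ) satisfies the variation of constants formula u(t) = e^{−t} u(0) + ∫₀^t e^{s−t} [J∗(f∘u(s)) + h] ds for all t ≥ 0, then ‖u(t)‖_{L^p(ℝ^N,ρ)} ≤ e^{−t} ‖u(0)‖_{L^p(ℝ^N,ρ)} + R for all t ≥ 0; consequently, for every ε > 0 and every t > ln(‖u(0)‖_{L^p(ℝ^N,ρ)}/ε) one has ‖u(t)‖_{L^p(ℝ^N,ρ)} < R + ε. -/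

import Mathlib

open MeasureTheory Metric ENNReal

/-!
Since `∫ ρ = 1`, the weighted space is an `L^p` space over a probability measure, so an
essentially bounded function has `L^p` norm at most its sup bound. As `|f| ≤ a`, every
nonlinear term `J ∗ (f ∘ u(s)) + h` is bounded by `a ‖J‖₁ + h ≤ R` (note `K ≥ 1`, testing (H2)
at `x = y`). In the variation of constants formula the forcing term therefore contributes at
most `∫₀ᵗ e^{s-t} R ds = (1 - e^{-t}) R ≤ R`, and `e^{-t} ‖u(0)‖ < ε` once `t > ln(‖u(0)‖/ε)`.
-/

lemma isProbabilityMeasure_withDensity_ofReal {α : Type*} [MeasurableSpace α] {μ : Measure α}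
    {ρ : α → ℝ} (hρ_nonneg : ∀ x, 0 ≤ ρ x) (hρ_int : Integrable ρ μ) (hρ_one : ∫ x, ρ x ∂μ = 1) :
    IsProbabilityMeasure (μ.withDensity fun x => ENNReal.ofReal (ρ x)) := by
  constructor
  rw [withDensity_apply _ MeasurableSet.univ, Measure.restrict_univ,
    ← ofReal_integral_eq_lintegral_ofReal hρ_int (.of_forall hρ_nonneg), hρ_one, ofReal_one]

lemma MeasureTheory.Lp.norm_le_of_ae_bound_of_isProbabilityMeasure {α E : Type*} [MeasurableSpace α]
    {μ : Measure α} [IsProbabilityMeasure μ] [NormedAddCommGroup E] {p : ℝ≥0∞}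
    {f : Lp E p μ} {C : ℝ} (hC : 0 ≤ C) (hfC : ∀ᵐ x ∂μ, ‖f x‖ ≤ C) : ‖f‖ ≤ C := by
  simpa [measureUnivNNReal] using Lp.norm_le_of_ae_bound hC hfC

lemma integrable_of_bounded_of_support_subset_closedBall {α E : Type*} [MeasurableSpace α]
    [PseudoMetricSpace α] [ProperSpace α] {μ : Measure α} [IsFiniteMeasureOnCompacts μ]
    [NormedAddCommGroup E] {f : α → E} (hf : AEStronglyMeasurable f μ) {M : ℝ}
    (hM : ∀ x, ‖f x‖ ≤ M) {c : α} {r : ℝ} (hsupp : Function.support f ⊆ closedBall c r) :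
    Integrable f μ :=
  (integrableOn_iff_integrable_of_support_subset hsupp).1 <|
    Measure.integrableOn_of_bounded measure_closedBall_lt_top.ne hf (.of_forall hM)

lemma norm_integral_mul_comp_sub_le {G : Type*} [MeasurableSpace G] [AddGroup G]
    [MeasurableAdd G] [MeasurableNeg G] {μ : Measure G} [μ.IsNegInvariant] [μ.IsAddLeftInvariant]
    {J w : G → ℝ} (hJ : Integrable J μ) {a : ℝ} (hw : ∀ y, |w y| ≤ a) (x : G) :
    ‖∫ y, J (x - y) * w y ∂μ‖ ≤ a * ∫ z, |J z| ∂μ :=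
  calc ‖∫ y, J (x - y) * w y ∂μ‖ ≤ ∫ y, |J (x - y)| * a ∂μ :=
        norm_integral_le_of_norm_le ((hJ.abs.comp_sub_left x).mul_const a) <| .of_forall fun y => by
          rw [norm_mul, Real.norm_eq_abs, Real.norm_eq_abs]
          exact mul_le_mul_of_nonneg_left (hw y) (abs_nonneg _)
    _ = a * ∫ z, |J z| ∂μ := by
        rw [integral_mul_const, integral_sub_left_eq_self (fun z => |J z|) μ x, mul_comm]

section VariationOfConstants

variable {E : Type*} [NormedAddCommGroup E] [NormedSpace ℝ E]

lemma norm_integral_exp_smul_le {g : ℝ → E} {R : ℝ} (hg : ∀ s, ‖g s‖ ≤ R) {t : ℝ}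
    (ht : 0 ≤ t) : ‖∫ s in (0 : ℝ)..t, Real.exp (s - t) • g s‖ ≤ (1 - Real.exp (-t)) * R := by
  have hexp_int : ∫ s in (0 : ℝ)..t, Real.exp (s - t) * R = (1 - Real.exp (-t)) * R := by
    rw [intervalIntegral.integral_mul_const,
      intervalIntegral.integral_comp_sub_right (fun s => Real.exp s) t,
      integral_exp, zero_sub, sub_self, Real.exp_zero]
  have hR : 0 ≤ R := (norm_nonneg _).trans (hg 0)
  have hexp_le : Real.exp (-t) ≤ 1 := Real.exp_le_one_iff.2 (neg_nonpos.2 ht)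
  calc ‖∫ s in (0 : ℝ)..t, Real.exp (s - t) • g s‖
      ≤ |∫ s in (0 : ℝ)..t, Real.exp (s - t) * R| := by
        refine intervalIntegral.norm_integral_le_abs_of_norm_le (.of_forall fun s => ?_)
          ((by fun_prop : Continuous fun s => Real.exp (s - t) * R).intervalIntegrable 0 t)
        rw [norm_smul, Real.norm_of_nonneg (Real.exp_pos _).le]
        exact mul_le_mul_of_nonneg_left (hg s) (Real.exp_pos _).le
    _ = (1 - Real.exp (-t)) * R := by
        rw [hexp_int, abs_of_nonneg (mul_nonneg (sub_nonneg.2 hexp_le) hR)]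

lemma norm_exp_smul_add_integral_le (x : E) {g : ℝ → E} {R : ℝ} (hg : ∀ s, ‖g s‖ ≤ R) {t : ℝ}
    (ht : 0 ≤ t) :
    ‖Real.exp (-t) • x + ∫ s in (0 : ℝ)..t, Real.exp (s - t) • g s‖
      ≤ Real.exp (-t) * ‖x‖ + R := by
  have hR : 0 ≤ R := (norm_nonneg _).trans (hg 0)
  calc ‖Real.exp (-t) • x + ∫ s in (0 : ℝ)..t, Real.exp (s - t) • g s‖
      ≤ Real.exp (-t) * ‖x‖ + (1 - Real.exp (-t)) * R := by
        refine (norm_add_le _ _).trans (add_le_add ?_ (norm_integral_exp_smul_le hg ht))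
        rw [norm_smul, Real.norm_of_nonneg (Real.exp_pos _).le]
    _ ≤ Real.exp (-t) * ‖x‖ + R := by nlinarith [Real.exp_pos (-t)]

end VariationOfConstants

lemma exp_neg_mul_lt_of_log_div_lt {c ε t : ℝ} (hc : 0 ≤ c) (hε : 0 < ε)
    (ht : Real.log (c / ε) < t) : Real.exp (-t) * c < ε := by
  rcases hc.eq_or_lt with rfl | hc
  · simpa using hε
  have : c / ε < Real.exp t := (Real.log_lt_iff_lt_exp (div_pos hc hε)).1 ht
  rw [Real.exp_neg, inv_mul_lt_iff₀ (Real.exp_pos t)]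
  rwa [div_lt_iff₀ hε] at this

theorem stmt_5_general (N : ℕ) (p : ℝ≥0∞)
    [Fact (1 ≤ p)]
    (h a K : ℝ) (hh : 0 < h) (ha : 0 < a)
    (f : ℝ → ℝ)
    (hfa : ∀ x : ℝ, |f x| ≤ a)
    (J : EuclideanSpace ℝ (Fin N) → ℝ)
    (hJmeas : Measurable J)
    (hJbdd : ∃ M : ℝ, ∀ x, |J x| ≤ M)
    (hJsupp : ∀ x, J x ≠ 0 → ‖x‖ ≤ 1)
    (ρ : EuclideanSpace ℝ (Fin N) → ℝ)
    (hρpos : ∀ x, 0 < ρ x) (hρint : Integrable ρ)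
    (hρ1 : ∫ x, ρ x = 1)
    (hH2 : ∀ y x : EuclideanSpace ℝ (Fin N), dist x y ≤ 1 → ρ x ≤ K * ρ y)
    (μ : Measure (EuclideanSpace ℝ (Fin N)))
    (hμ : μ = volume.withDensity fun x => ENNReal.ofReal (ρ x))
    (R : ℝ) (hR : R = a * K ^ (1 / p.toReal) * (∫ z, |J z|) + h)
    (u g : ℝ → Lp ℝ p μ)
    -- `g s` is (the class of) `J∗(f∘u(s)) + h`:
    (hg : ∀ s : ℝ, ⇑(g s) =ᵐ[μ] fun x =>
      (∫ y, J (x - y) * f ((u s : EuclideanSpace ℝ (Fin N) → ℝ) y)) + h)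
    -- variation of constants formula (Bochner integral in `L^p(ℝ^N, ρ)`):
    (hvoc : ∀ t : ℝ, 0 ≤ t →
      u t = Real.exp (-t) • u 0 + ∫ s in (0:ℝ)..t, Real.exp (s - t) • g s) :
    (∀ t : ℝ, 0 ≤ t → ‖u t‖ ≤ Real.exp (-t) * ‖u 0‖ + R) ∧
    ∀ ε : ℝ, 0 < ε → ∀ t : ℝ, 0 ≤ t → Real.log (‖u 0‖ / ε) < t → ‖u t‖ < R + ε := by
  have : IsProbabilityMeasure μ :=
    hμ ▸ isProbabilityMeasure_withDensity_ofReal (fun x => (hρpos x).le) hρint hρ1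
  obtain ⟨M, hM⟩ := hJbdd
  have hJint : Integrable J :=
    integrable_of_bounded_of_support_subset_closedBall hJmeas.aestronglyMeasurable hM
      (c := 0) (r := 1) fun x hx => by simpa using hJsupp x hx
  have hK_one : 1 ≤ K := (le_mul_iff_one_le_left (hρpos 0)).1 (hH2 0 0 (by simp))
  have hC_le_R : a * (∫ z, |J z|) + h ≤ R := by
    have hJ_nonneg : 0 ≤ ∫ z, |J z| := integral_nonneg fun z => abs_nonneg (J z)
    rw [hR]
    gcongr
    exact le_mul_of_one_le_right ha.le (Real.one_le_rpow hK_one (by positivity))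
  have hg_bound : ∀ s, ‖g s‖ ≤ R := fun s =>
    (Lp.norm_le_of_ae_bound_of_isProbabilityMeasure (by positivity) <| by
      filter_upwards [hg s] with x hx
      rw [hx]
      refine (norm_add_le _ _).trans (add_le_add (norm_integral_mul_comp_sub_le hJint
        (fun y => hfa _) x) ?_)
      rw [Real.norm_of_nonneg hh.le]).trans hC_le_R
  have hbound : ∀ t, 0 ≤ t → ‖u t‖ ≤ Real.exp (-t) * ‖u 0‖ + R := fun t ht =>
    hvoc t ht ▸ norm_exp_smul_add_integral_le (u 0) hg_bound ht
  refine ⟨hbound, fun ε hε t ht hlt => ?_⟩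
  linarith [hbound t ht, exp_neg_mul_lt_of_log_div_lt (norm_nonneg (u 0)) hε hlt]

/-- Under (H1)-(H3), with `R = a K^{1/p} ‖J‖_{L¹} + h`, any solution of the
variation of constants formula `u(t) = e^{−t} u(0) + ∫₀ᵗ e^{s−t}[J∗(f∘u(s)) + h] ds` in
`L^p(ℝ^N, ρ)` satisfies `‖u(t)‖ ≤ e^{−t}‖u(0)‖ + R` for all `t ≥ 0`; consequently for
every `ε > 0` and every `t > ln(‖u(0)‖/ε)` one has `‖u(t)‖ < R + ε`. -/
theorem stmt_5 (N : ℕ) (hN : 1 ≤ N) (p : ℝ≥0∞) (hp1 : 1 < p) (hp2 : p ≠ ∞)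
    [Fact (1 ≤ p)]
    (h a k₁ K : ℝ) (hh : 0 < h) (ha : 0 < a) (hk₁ : 0 < k₁) (hK : 0 < K)
    (f : ℝ → ℝ) (hf : ∀ x y : ℝ, |f x - f y| ≤ k₁ * |x - y|)
    (hfa : ∀ x : ℝ, |f x| ≤ a)
    (J : EuclideanSpace ℝ (Fin N) → ℝ)
    (hJmeas : Measurable J) (hJnn : ∀ x, 0 ≤ J x)
    (hJbdd : ∃ M : ℝ, ∀ x, |J x| ≤ M)
    (hJsupp : ∀ x, J x ≠ 0 → ‖x‖ ≤ 1)
    (ρ : EuclideanSpace ℝ (Fin N) → ℝ)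
    (hρpos : ∀ x, 0 < ρ x) (hρint : Integrable ρ)
    (hρeven : ∀ x, ρ (-x) = ρ x) (hρ1 : ∫ x, ρ x = 1)
    (hH2 : ∀ y x : EuclideanSpace ℝ (Fin N), dist x y ≤ 1 → ρ x ≤ K * ρ y)
    (μ : Measure (EuclideanSpace ℝ (Fin N)))
    (hμ : μ = volume.withDensity fun x => ENNReal.ofReal (ρ x))
    (R : ℝ) (hR : R = a * K ^ (1 / p.toReal) * (∫ z, |J z|) + h)
    (u g : ℝ → Lp ℝ p μ)
    -- `g s` is (the class of) `J∗(f∘u(s)) + h`: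
    (hg : ∀ s : ℝ, ⇑(g s) =ᵐ[μ] fun x =>
      (∫ y, J (x - y) * f ((u s : EuclideanSpace ℝ (Fin N) → ℝ) y)) + h)
    -- variation of constants formula (Bochner integral in `L^p(ℝ^N, ρ)`):
    (hvoc : ∀ t : ℝ, 0 ≤ t →
      u t = Real.exp (-t) • u 0 + ∫ s in (0:ℝ)..t, Real.exp (s - t) • g s) :
    (∀ t : ℝ, 0 ≤ t → ‖u t‖ ≤ Real.exp (-t) * ‖u 0‖ + R) ∧
    ∀ ε : ℝ, 0 < ε → ∀ t : ℝ, 0 ≤ t → Real.log (‖u 0‖ / ε) < t → ‖u t‖ < R + ε :=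
  stmt_5_general N p h a K hh ha f hfa J hJmeas hJbdd hJsupp ρ hρpos hρint hρ1 hH2 μ hμ R hR u g hg
    hvoc
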